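/- arXiv:0805.0108 — 12 statements merged into one kernel-verified Lean document; each statement's English description precedes it below -/
import Mathlib

section
/- Suppose a ≥ 1 and b > 1. Then the supremum of Rs(P1,P2) over all P1 ≥ 0 and P2 ≥ 0 equals (1/2)·log₂ b. -/
/-- `g x = (1/2) * log_2 (1 + x)`. -/
noncomputable def g (x : ℝ) : ℝ := (1 / 2) * Real.logb 2 (1 + x)

/-- The achievable secrecy rate `Rs(P1, P2)` for the Gaussian wiretap channel with a
helping interferer, with channel gains `a`, `b` and powers `P1`, `P2`. -/
noncomputable def Rs (a b P1 P2 : ℝ) : ℝ :=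
  if 1 + P2 ≤ a then 0
  else if 1 ≤ a then
    -- case `1 ≤ a < 1 + P2`
    if 1 + P1 ≤ b then g P1 - g (a * P1 / (1 + P2))
    else if 1 ≤ b then max 0 (g (P1 + b * P2) - g (a * P1 + P2))
    else max 0 (g (P1 / (1 + b * P2)) - g (a * P1 / (1 + P2)))
  else
    -- case `a < 1`, with `β1 = (1+P1)/(1+a*P1)` and `β2 = a*(1+P1)/(1+a*P1+(1-a)*P2)`
    if 1 + P1 ≤ b then g P1 - g (a * P1 / (1 + P2))
    else if (1 + P1) / (1 + a * P1) ≤ b then g (P1 + b * P2) - g (a * P1 + P2)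
    else if a * (1 + P1) / (1 + a * P1 + (1 - a) * P2) ≤ b then g P1 - g (a * P1)
    else g (P1 / (1 + b * P2)) - g (a * P1 / (1 + P2))

/-!
With `a ≥ 1` and `b ≥ 1`, besides the zero branch only the branches `1 + P1 ≤ b` and
`1 ≤ b < 1 + P1` are reachable. In both, the ratio of the two arguments `1 + x` of `g` is at
most `b`, because `1 + P1 + b P2 ≤ b (1 + a P1 + P2)`. The bound is approached with
`P1 = b - 1` and jamming power `P2 → ∞`, which drives the eavesdropper's term
`g (a P1 / (1 + P2))` to `0`.
-/

open Real Filter Topology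

lemma g_sub_one (b : ℝ) : g (b - 1) = 1 / 2 * logb 2 b := by
  simp [g]

lemma g_zero : g 0 = 0 := by
  simp [g]

lemma continuousAt_g {x : ℝ} (hx : -1 < x) : ContinuousAt g x :=
  ((continuousAt_const.add continuousAt_id).logb (show 1 + x ≠ 0 by linarith)).const_mul _

lemma g_sub_g_le_of_le_mul {x y c : ℝ} (hx : -1 < x) (hy : -1 < y)
    (h : 1 + x ≤ c * (1 + y)) : g x - g y ≤ 1 / 2 * logb 2 c := by
  have hc : 0 < c := pos_of_mul_pos_left (by linarith) (by linarith : 0 ≤ 1 + y)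
  have hlog : logb 2 (1 + x) ≤ logb 2 c + logb 2 (1 + y) := by
    rw [← logb_mul hc.ne' (by linarith)]
    exact logb_le_logb_of_le (by norm_num) (by linarith) h
  unfold g
  linarith

section StrongEavesdropper

variable {a b P1 P2 : ℝ}

lemma Rs_eq_of_one_add_le (ha : 1 ≤ a) (hP2 : a < 1 + P2) (hP1 : 1 + P1 ≤ b) :
    Rs a b P1 P2 = g P1 - g (a * P1 / (1 + P2)) := by
  rw [Rs, if_neg hP2.not_ge, if_pos ha, if_pos hP1]

lemma Rs_le_half_logb (ha : 1 ≤ a) (hb : 1 ≤ b) (hP1 : 0 ≤ P1) (hP2 : 0 ≤ P2) :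
    Rs a b P1 P2 ≤ 1 / 2 * logb 2 b := by
  have hlogb : 0 ≤ 1 / 2 * logb 2 b := by
    have := logb_nonneg (by norm_num : (1 : ℝ) < 2) hb
    positivity
  unfold Rs
  split_ifs
  · exact hlogb
  · have hy : 0 ≤ a * P1 / (1 + P2) := by positivity
    exact g_sub_g_le_of_le_mul (by linarith) (by linarith) (by nlinarith)
  · refine max_le hlogb (g_sub_g_le_of_le_mul (by nlinarith) (by nlinarith) ?_)
    -- `b (1 + a P1 + P2) - (1 + P1 + b P2) = (b - 1) + (a b - 1) P1`
    nlinarith [mul_nonneg (sub_nonneg.2 (one_le_mul_of_one_le_of_one_le ha hb)) hP1]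

lemma tendsto_Rs_atTop (ha : 1 ≤ a) :
    Tendsto (fun P2 => Rs a b (b - 1) P2) atTop (𝓝 (1 / 2 * logb 2 b)) := by
  have hjam : Tendsto (fun P2 : ℝ => a * (b - 1) / (1 + P2)) atTop (𝓝 0) :=
    tendsto_const_nhds.div_atTop (tendsto_atTop_add_const_left _ 1 tendsto_id)
  have hleak : Tendsto (fun P2 : ℝ => g (a * (b - 1) / (1 + P2))) atTop (𝓝 0) := by
    simpa only [g_zero, Function.comp_def] using (continuousAt_g (by norm_num)).tendsto.comp hjam
  rw [← g_sub_one, ← sub_zero (g (b - 1))]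
  refine (hleak.const_sub (g (b - 1))).congr' ?_
  filter_upwards [eventually_gt_atTop a] with P2 hP2
  exact (Rs_eq_of_one_add_le ha (by linarith) (by linarith)).symm

end StrongEavesdropper

/-- If `a ≥ 1` and `b > 1`, the supremum of `Rs(P1,P2)` over all `P1 ≥ 0`, `P2 ≥ 0`
equals `(1/2) log₂ b`. -/
theorem stmt0 (a b : ℝ) (ha : 1 ≤ a) (hb : 1 < b) :
    IsLUB {r : ℝ | ∃ P1 P2 : ℝ, 0 ≤ P1 ∧ 0 ≤ P2 ∧ r = Rs a b P1 P2}
      ((1 / 2) * Real.logb 2 b) := by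
  constructor
  · rintro r ⟨P1, P2, hP1, hP2, rfl⟩
    exact Rs_le_half_logb ha hb.le hP1 hP2
  · intro u hu
    refine le_of_tendsto (tendsto_Rs_atTop ha) ?_
    filter_upwards [eventually_ge_atTop 0] with P2 hP2
    exact hu ⟨b - 1, P2, by linarith, hP2, rfl⟩
end

section
/- Suppose a ≥ 1 and 1/a ≤ b ≤ 1. Then Rs(P1,P2) = 0 for all P1 ≥ 0 and P2 ≥ 0. -/
lemma g_le_g {x y : ℝ} (hx : -1 < x) (hxy : x ≤ y) : g x ≤ g y := by
  unfold g
  gcongr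
  · norm_num
  · linarith

lemma max_zero_g_sub_g_eq_zero {x y : ℝ} (hx : -1 < x) (hxy : x ≤ y) :
    max 0 (g x - g y) = 0 :=
  max_eq_left (sub_nonpos.2 (g_le_g hx hxy))

lemma div_one_add_mul_le_mul_div_one_add {a b P1 P2 : ℝ} (ha : 1 ≤ a) (hab : 1 ≤ a * b)
    (hP1 : 0 ≤ P1) (hP2 : 0 ≤ P2) : P1 / (1 + b * P2) ≤ a * P1 / (1 + P2) := by
  have hb : 0 < b := pos_of_mul_pos_right (a := a) (by linarith) (by linarith)
  rw [div_le_div_iff₀ (by positivity) (by positivity)]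
  nlinarith [mul_nonneg (sub_nonneg.2 ha) hP1, mul_nonneg (sub_nonneg.2 hab) (mul_nonneg hP1 hP2)]

/-- If `a ≥ 1` and `1/a ≤ b ≤ 1`, then `Rs(P1,P2) = 0` for all `P1 ≥ 0`, `P2 ≥ 0`. -/
theorem stmt2 (a b : ℝ) (ha : 1 ≤ a) (hb1 : 1 / a ≤ b) (hb2 : b ≤ 1) :
    ∀ P1 P2 : ℝ, 0 ≤ P1 → 0 ≤ P2 → Rs a b P1 P2 = 0 := by
  intro P1 P2 hP1 hP2
  have hb : 0 < b := (one_div_pos.2 (by linarith)).trans_le hb1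
  have hab : 1 ≤ a * b := (div_le_iff₀' (by linarith)).1 hb1
  unfold Rs
  split_ifs
  · rfl
  · obtain rfl : P1 = 0 := by linarith
    simp
  · exact max_zero_g_sub_g_eq_zero (neg_one_lt_zero.trans_le (by positivity)) (by nlinarith)
  · exact max_zero_g_sub_g_eq_zero (neg_one_lt_zero.trans_le (by positivity))
      (div_one_add_mul_le_mul_div_one_add ha hab hP1 hP2)
end

section
/- Suppose 0 < a < 1 and b > 1/a. Then the supremum of Rs(P1,P2) over all P1 ≥ 0 and P2 ≥ 0 equals (1/2)·log₂ b. -/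
/-- If `0 < a < 1` and `b > 1/a`, the supremum of `Rs(P1,P2)` over all `P1 ≥ 0`, `P2 ≥ 0`
equals `(1/2) log₂ b`. -/
theorem stmt3 (a b : ℝ) (ha0 : 0 < a) (ha : a < 1) (hb : 1 / a < b) :
    IsLUB {r : ℝ | ∃ P1 P2 : ℝ, 0 ≤ P1 ∧ 0 ≤ P2 ∧ r = Rs a b P1 P2}
      ((1 / 2) * Real.logb 2 b) := by
  have hb1 : 1 < b := lt_trans (one_lt_one_div ha0 ha) hb
  constructor
  · -- upper bound
    rintro r ⟨P1, P2, hP1, hP2, rfl⟩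
    simp only [Rs]
    rw [if_neg (by linarith), if_neg (by linarith)]
    by_cases hc : 1 + P1 ≤ b
    · rw [if_pos hc]
      have h1 : 0 ≤ Real.logb 2 (1 + a * P1 / (1 + P2)) :=
        Real.logb_nonneg one_lt_two (by
          have : 0 ≤ a * P1 / (1 + P2) := by positivity
          linarith)
      have h2 : Real.logb 2 (1 + P1) ≤ Real.logb 2 b :=
        Real.logb_le_logb_of_le one_lt_two (by linarith) hc
      simp only [g]
      linarith
    · rw [if_neg hc]
      have hβ1 : (1 + P1) / (1 + a * P1) ≤ b := by
        have h : (1 + P1) / (1 + a * P1) ≤ 1 / a := by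
          rw [div_le_div_iff₀ (by positivity) ha0]
          nlinarith
        linarith
      rw [if_pos hβ1]
      have h1 : 1 + P1 ≤ b * (1 + a * P1) := (div_le_iff₀ (by positivity)).mp hβ1
      have key : 1 + (P1 + b * P2) ≤ b * (1 + (a * P1 + P2)) := by nlinarith
      have hlog : Real.logb 2 (1 + (P1 + b * P2)) ≤
          Real.logb 2 b + Real.logb 2 (1 + (a * P1 + P2)) := by
        rw [← Real.logb_mul (by positivity) (by positivity)]
        exact Real.logb_le_logb_of_le one_lt_two (by positivity) key
      simp only [g]
      linarith
  · -- least upper bound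
    intro u hu
    have hmem : ∀ n : ℕ, g (b - 1) - g (a * (b - 1) / (1 + n)) ≤ u := by
      intro n
      apply hu
      refine ⟨b - 1, n, by linarith, n.cast_nonneg, ?_⟩
      have hn : (0:ℝ) ≤ n := n.cast_nonneg
      simp only [Rs]
      rw [if_neg (by linarith), if_neg (by linarith), if_pos (by linarith)]
    have h0 : Filter.Tendsto (fun n : ℕ => a * (b - 1) / (1 + n)) Filter.atTop (nhds 0) := by
      have h := tendsto_one_div_add_atTop_nhds_zero_nat.const_mul (a * (b - 1))
      rw [mul_zero] at h
      convert h using 2 with n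
      rw [mul_one_div]
      ring_nf
    have hgc : ContinuousAt g 0 := by
      have h1 : ContinuousAt (fun x : ℝ => Real.logb 2 (1 + x)) 0 := by
        have h2 : ContinuousAt (fun x : ℝ => 1 + x) 0 :=
          (continuous_const.add continuous_id).continuousAt
        exact ContinuousAt.comp (by
          show ContinuousAt (Real.logb 2) (1 + 0)
          norm_num [Real.continuousAt_logb]) h2
      exact continuousAt_const.mul h1
    have hg0 : g 0 = 0 := by simp [g]
    have htend : Filter.Tendsto (fun n : ℕ => g (b - 1) - g (a * (b - 1) / (1 + n)))
        Filter.atTop (nhds (g (b - 1))) := by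
      have := (hgc.tendsto.comp h0)
      rw [hg0] at this
      have h2 := (tendsto_const_nhds (x := g (b - 1)) (f := Filter.atTop (α := ℕ))).sub this
      simpa using h2
    have hle : g (b - 1) ≤ u := le_of_tendsto htend (Filter.Eventually.of_forall hmem)
    have : g (b - 1) = (1 / 2) * Real.logb 2 b := by
      simp [g]
    linarith
end

section
/- Suppose 0 < a < 1 and b < 1. Then the supremum of Rs(P1,P2) over all P1 ≥ 0 and P2 ≥ 0 equals (1/2)·log₂(1/(a·b)). -/
/-!
For `a < 1` and `b < 1` the threshold `β1` is at least `1`, so `Rs` is one of the last two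
branches. Both are `(1/2) log₂` of the ratio `(1 + P1/(1 + b P2)) / (1 + a P1/(1 + P2))`
(with `P2 = 0` in the third branch), and this ratio is at most `1/(ab)`.
Along `P1 = t², P2 = t` the threshold `β2` tends to `1 > b`, so the last branch is eventually
active, and the ratio tends to `1/(ab)`.
-/

open Real Filter Topology

noncomputable def secrecyRatio (a b P1 P2 : ℝ) : ℝ :=
  (1 + P1 / (1 + b * P2)) / (1 + a * P1 / (1 + P2))

theorem g_sub_g {x y : ℝ} (hx : 0 < 1 + x) (hy : 0 < 1 + y) :
    g x - g y = 1 / 2 * logb 2 ((1 + x) / (1 + y)) := by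
  rw [g, g, ← mul_sub, logb_div hx.ne' hy.ne']

section SecrecyRatio

variable {a b P1 P2 : ℝ}

theorem g_sub_g_eq_half_logb_secrecyRatio (ha : 0 ≤ a) (hb : 0 ≤ b) (hP1 : 0 ≤ P1)
    (hP2 : 0 ≤ P2) :
    g (P1 / (1 + b * P2)) - g (a * P1 / (1 + P2)) = 1 / 2 * logb 2 (secrecyRatio a b P1 P2) :=
  g_sub_g (by positivity) (by positivity)

theorem secrecyRatio_pos (ha : 0 ≤ a) (hb : 0 ≤ b) (hP1 : 0 ≤ P1) (hP2 : 0 ≤ P2) :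
    0 < secrecyRatio a b P1 P2 := by
  unfold secrecyRatio; positivity

theorem secrecyRatio_le (ha0 : 0 < a) (ha : a ≤ 1) (hb0 : 0 < b) (hb : b ≤ 1) (hP1 : 0 ≤ P1)
    (hP2 : 0 ≤ P2) : secrecyRatio a b P1 P2 ≤ 1 / (a * b) := by
  have hs : 0 < 1 + b * P2 := by positivity
  have ht : 0 < 1 + P2 := by positivity
  rw [secrecyRatio, div_le_div_iff₀ (by positivity) (by positivity), one_add_div hs.ne',
    one_add_div ht.ne', div_mul_eq_mul_div, one_mul, div_le_div_iff₀ hs ht]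
  -- `ab ≤ 1` handles the `(1 + P2)(1 + b P2)` part and `b ≤ 1` the `a P1` part
  have hab : a * b ≤ 1 := by nlinarith
  nlinarith [mul_nonneg (mul_nonneg ha0.le hP1) (mul_nonneg (sub_nonneg.2 hb) ht.le),
    mul_nonneg (sub_nonneg.2 hab) (mul_nonneg ht.le hs.le)]

theorem half_logb_secrecyRatio_le (ha0 : 0 < a) (ha : a ≤ 1) (hb0 : 0 < b) (hb : b ≤ 1)
    (hP1 : 0 ≤ P1) (hP2 : 0 ≤ P2) :
    1 / 2 * logb 2 (secrecyRatio a b P1 P2) ≤ 1 / 2 * logb 2 (1 / (a * b)) := by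
  gcongr
  exacts [one_lt_two, secrecyRatio_pos ha0.le hb0.le hP1 hP2, secrecyRatio_le ha0 ha hb0 hb hP1 hP2]

end SecrecyRatio

section Rs

variable {a b P1 P2 : ℝ}

theorem Rs_eq_of_lt_one (ha0 : 0 ≤ a) (ha : a < 1) (hb : b < 1) (hP1 : 0 ≤ P1) (hP2 : 0 ≤ P2) :
    Rs a b P1 P2 = if a * (1 + P1) / (1 + a * P1 + (1 - a) * P2) ≤ b then g P1 - g (a * P1)
      else g (P1 / (1 + b * P2)) - g (a * P1 / (1 + P2)) := by
  have hβ1 : 1 ≤ (1 + P1) / (1 + a * P1) := (one_le_div (by positivity)).2 (by nlinarith)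
  rw [Rs, if_neg (by linarith), if_neg (by linarith), if_neg (by linarith), if_neg (by linarith)]

theorem Rs_le_of_lt_one (ha0 : 0 < a) (ha : a < 1) (hb0 : 0 < b) (hb : b < 1) (hP1 : 0 ≤ P1)
    (hP2 : 0 ≤ P2) : Rs a b P1 P2 ≤ 1 / 2 * logb 2 (1 / (a * b)) := by
  rw [Rs_eq_of_lt_one ha0.le ha hb hP1 hP2]
  split_ifs
  · have h := g_sub_g_eq_half_logb_secrecyRatio ha0.le hb0.le hP1 le_rfl
    simp only [mul_zero, add_zero, div_one] at h
    rw [h]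
    exact half_logb_secrecyRatio_le ha0 ha.le hb0 hb.le hP1 le_rfl
  · rw [g_sub_g_eq_half_logb_secrecyRatio ha0.le hb0.le hP1 hP2]
    exact half_logb_secrecyRatio_le ha0 ha.le hb0 hb.le hP1 hP2

end Rs

theorem tendsto_atTop_of_continuousAt_inv {f h : ℝ → ℝ} (hf : ContinuousAt f 0)
    (hfh : ∀ t > 0, f t⁻¹ = h t) : Tendsto h atTop (𝓝 (f 0)) :=
  (hf.tendsto.comp tendsto_inv_atTop_zero).congr' <|
    (eventually_gt_atTop 0).mono fun t ht => hfh t ht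

section Asymptotics

variable {a b : ℝ}

theorem tendsto_secrecyRatio_sq_self (ha : 0 < a) (hb : 0 < b) :
    Tendsto (fun t => secrecyRatio a b (t ^ 2) t) atTop (𝓝 (1 / (a * b))) := by
  have hf : ContinuousAt
      (fun x : ℝ => (x ^ 2 + b * x + 1) * (x + 1) / ((x + b) * (x ^ 2 + x + a))) 0 :=
    ContinuousAt.div (by fun_prop) (by fun_prop) (by positivity)
  convert tendsto_atTop_of_continuousAt_inv hf fun t ht => ?_ using 2
  · simp [mul_comm]
  · rw [secrecyRatio]
    field_simp

theorem tendsto_beta2_sq_self (ha : 0 < a) :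
    Tendsto (fun t => a * (1 + t ^ 2) / (1 + a * t ^ 2 + (1 - a) * t)) atTop (𝓝 1) := by
  have hf : ContinuousAt (fun x : ℝ => a * (x ^ 2 + 1) / (x ^ 2 + (1 - a) * x + a)) 0 :=
    ContinuousAt.div (by fun_prop) (by fun_prop) (by simp [ha.ne'])
  convert tendsto_atTop_of_continuousAt_inv hf fun t ht => ?_ using 2
  · simp [ha.ne']
  · field_simp
    ring

theorem eventually_Rs_sq_self_eq (ha0 : 0 < a) (ha : a < 1) (hb0 : 0 < b) (hb : b < 1) :
    ∀ᶠ t in atTop, Rs a b (t ^ 2) t = 1 / 2 * logb 2 (secrecyRatio a b (t ^ 2) t) := by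
  filter_upwards [(tendsto_beta2_sq_self ha0).eventually (eventually_gt_nhds hb),
    eventually_ge_atTop 0] with t hβ2 ht
  rw [Rs_eq_of_lt_one ha0.le ha hb (sq_nonneg t) ht, if_neg hβ2.not_ge,
    g_sub_g_eq_half_logb_secrecyRatio ha0.le hb0.le (sq_nonneg t) ht]

end Asymptotics

/-- If `0 < a < 1` and `0 < b < 1`, the supremum of `Rs(P1,P2)` over all `P1 ≥ 0`, `P2 ≥ 0`
equals `(1/2) log₂ (1/(a b))`. -/
theorem stmt4 (a b : ℝ) (ha0 : 0 < a) (ha : a < 1) (hb0 : 0 < b) (hb : b < 1) :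
    IsLUB {r : ℝ | ∃ P1 P2 : ℝ, 0 ≤ P1 ∧ 0 ≤ P2 ∧ r = Rs a b P1 P2}
      ((1 / 2) * Real.logb 2 (1 / (a * b))) := by
  refine ⟨?_, fun c hc => ?_⟩
  · rintro r ⟨P1, P2, hP1, hP2, rfl⟩
    exact Rs_le_of_lt_one ha0 ha hb0 hb hP1 hP2
  · have hlim := ((tendsto_secrecyRatio_sq_self ha0 hb0).logb (b := 2)
      (one_div_pos.2 (mul_pos ha0 hb0)).ne').const_mul (1 / 2)
    refine le_of_tendsto hlim ?_
    filter_upwards [eventually_Rs_sq_self_eq ha0 ha hb0 hb, eventually_ge_atTop 0] with t hRs ht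
    exact hRs ▸ hc ⟨t ^ 2, t, sq_nonneg t, ht, rfl⟩
end

section
/- Suppose a ≥ 1, b > 1, and the peak powers P̄1 > 0 and P̄2 > 0 satisfy P̄2 > a − 1. Then for all P1 ∈ [0, P̄1] and P2 ∈ [0, P̄2], Rs(P1,P2) ≤ Rs(min(P̄1, b−1), P̄2); that is, the power pair (min(P̄1, b−1), P̄2) maximizes the achievable secrecy rate over the power-constraint box. -/
set_option maxHeartbeats 1000000

lemma gdiff {x1 y1 x2 y2 : ℝ} (hx1 : 0 < 1+x1) (hy1 : 0 < 1+y1) (hx2 : 0 < 1+x2)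
    (hy2 : 0 < 1+y2) (h : (1+x1)*(1+y2) ≤ (1+x2)*(1+y1)) :
    g x1 - g y1 ≤ g x2 - g y2 := by
  have key : Real.logb 2 ((1+x1)*(1+y2)) ≤ Real.logb 2 ((1+x2)*(1+y1)) :=
    Real.logb_le_logb_of_le one_lt_two (mul_pos hx1 hy2) h
  rw [Real.logb_mul hx1.ne' hy2.ne', Real.logb_mul hx2.ne' hy1.ne'] at key
  unfold g; linarith

lemma one_add_div' {u d : ℝ} (hd : d ≠ 0) : 1 + u/d = (d+u)/d := by field_simp

/-- If `a ≥ 1`, `b > 1` and `P̄2 > a - 1`, the power pair `(min P̄1 (b-1), P̄2)` maximizes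
the achievable secrecy rate over the power-constraint box `[0,P̄1] × [0,P̄2]`. -/
theorem stmt6 (a b Pbar1 Pbar2 : ℝ) (ha : 1 ≤ a) (hb : 1 < b)
    (hPbar1 : 0 < Pbar1) (hPbar2 : 0 < Pbar2) (h : a - 1 < Pbar2) :
    ∀ P1 ∈ Set.Icc (0 : ℝ) Pbar1, ∀ P2 ∈ Set.Icc (0 : ℝ) Pbar2,
      Rs a b P1 P2 ≤ Rs a b (min Pbar1 (b - 1)) Pbar2 := by
  rintro P1 ⟨hP10, hP11⟩ P2 ⟨hP20, hP21⟩
  obtain ⟨Q, hQdef⟩ : ∃ Q, Q = min Pbar1 (b-1) := ⟨_, rfl⟩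
  rw [← hQdef]
  have hQ0 : 0 < Q := hQdef ▸ lt_min hPbar1 (by linarith)
  have hQb : Q ≤ b - 1 := hQdef ▸ min_le_right _ _
  have hd2 : (0:ℝ) < 1 + Pbar2 := by linarith
  have hna : ¬ (1 + Pbar2 ≤ a) := by linarith
  have hyQ : 0 ≤ a * Q / (1 + Pbar2) := by positivity
  have hRHS_eq : Rs a b Q Pbar2 = g Q - g (a * Q / (1 + Pbar2)) := by
    rw [Rs, if_neg hna, if_pos ha, if_pos (by linarith)]
  have hRHS0 : 0 ≤ Rs a b Q Pbar2 := by
    rw [hRHS_eq]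
    have := gdiff (x1 := a*Q/(1+Pbar2)) (y1 := 0) (x2 := Q) (y2 := 0)
      (by linarith) (by norm_num) (by linarith) (by norm_num)
      (by
        have : a * Q / (1+Pbar2) ≤ Q := by
          rw [div_le_iff₀ hd2]; nlinarith
        nlinarith)
    have hg0 : g 0 = 0 := by simp [g]
    rw [hg0] at this; linarith
  by_cases hA : 1 + P2 ≤ a
  · rw [Rs, if_pos hA]; exact hRHS0
  have hd1 : (0:ℝ) < 1 + P2 := by linarith [not_le.1 (show ¬ 1+P2 ≤ a from hA)]
  rw [Rs, if_neg hA, if_pos ha]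
  by_cases hB : 1 + P1 ≤ b
  · -- P1 ≤ b - 1 : direct monotonicity
    rw [if_pos hB, hRHS_eq]
    have hPQ : P1 ≤ Q := hQdef ▸ le_min hP11 (by linarith)
    have hy1 : 0 ≤ a * P1 / (1 + P2) := div_nonneg (mul_nonneg (by linarith) hP10) hd1.le
    apply gdiff (by linarith) (by linarith) (by linarith) (by linarith)
    rw [one_add_div' hd2.ne', one_add_div' hd1.ne', ← mul_div_assoc, ← mul_div_assoc,
      div_le_div_iff₀ hd2 hd1]
    nlinarith [mul_nonneg (mul_nonneg (sub_nonneg.2 hPQ)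
        (show (0:ℝ) ≤ 1 + Pbar2 - a by linarith)) hd1.le,
      mul_nonneg (mul_nonneg (mul_nonneg (show (0:ℝ) ≤ a by linarith) hP10)
        (sub_nonneg.2 hP21)) (show (0:ℝ) ≤ 1 + Q by linarith)]
  · -- b - 1 < P1
    rw [if_neg hB, if_pos hb.le, hRHS_eq]
    have hbP1 : b - 1 < P1 := by linarith [not_le.1 hB]
    have hQe : Q = b - 1 := hQdef.trans (min_eq_right (by linarith))
    have hRHS0' : 0 ≤ g Q - g (a * Q / (1 + Pbar2)) := hRHS_eq ▸ hRHS0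
    refine max_le hRHS0' ?_
    rw [hQe]
    have hab : (0:ℝ) ≤ a*b - 1 := by nlinarith
    have hkey : (0:ℝ) ≤ a - 1 + P2*(a*b-1) := by nlinarith [mul_nonneg hP20 hab]
    have hy2 : 0 ≤ a * (b-1) / (1 + Pbar2) :=
      div_nonneg (mul_nonneg (by linarith) (by linarith)) hd2.le
    apply gdiff (by nlinarith) (by nlinarith) (by linarith) (by linarith)
    rw [one_add_div' hd2.ne', ← mul_div_assoc, div_le_iff₀ hd2]
    have t1 : (0:ℝ) ≤ (b-1)*(Pbar2-P2)*a*b :=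
      mul_nonneg (mul_nonneg (mul_nonneg (by linarith) (by linarith)) (by linarith)) (by linarith)
    have t2 : (0:ℝ) ≤ (P1-(b-1))*((a-1)+Pbar2*(a*b-1)) :=
      mul_nonneg (by linarith) (by nlinarith [mul_nonneg hPbar2.le hab])
    linarith [t1, t2]
end

section
/- Suppose a ≥ 1, b < 1/a, and the peak powers P̄1 > 0 and P̄2 > 0 satisfy P̄2 > (a−1)/(1−a·b). Then for all P1 ∈ [0, P̄1] and P2 ∈ [0, P̄2], Rs(P1,P2) ≤ Rs(P̄1, min(P̄2, P2*)); that is, the power pair (P̄1, min(P̄2, P2*)) maximizes the achievable secrecy rate over the power-constraint box. -/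
noncomputable def P2star (a b Pbar1 : ℝ) : ℝ :=
  (a - 1 + Real.sqrt ((a - 1) ^ 2 + (1 / b - a) * (a - b + (1 - b) * a * Pbar1))) / (1 - a * b)

open Real

lemma g_sub_g_le_g_sub_g {x₁ y₁ x₂ y₂ : ℝ} (hx₁ : 0 ≤ x₁) (hy₁ : 0 ≤ y₁) (hx₂ : 0 ≤ x₂)
    (hy₂ : 0 ≤ y₂) (h : (1 + x₁) * (1 + y₂) ≤ (1 + x₂) * (1 + y₁)) :
    g x₁ - g y₁ ≤ g x₂ - g y₂ := by
  have key : logb 2 (1 + x₁) + logb 2 (1 + y₂) ≤ logb 2 (1 + x₂) + logb 2 (1 + y₁) := by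
    rw [← logb_mul (by positivity) (by positivity), ← logb_mul (by positivity) (by positivity)]
    exact logb_le_logb_of_le one_lt_two (by positivity) h
  unfold g
  linarith

noncomputable def jammedRate (a b P1 P2 : ℝ) : ℝ :=
  g (P1 / (1 + b * P2)) - g (a * P1 / (1 + P2))

lemma jammedRate_le_jammedRate {a b x y u v : ℝ} (ha : 0 ≤ a) (hb : 0 ≤ b) (hx : 0 ≤ x)
    (hy : 0 ≤ y) (hu : 0 ≤ u) (hv : 0 ≤ v)
    (h : (1 + b * u + x) * (1 + v + a * y) * ((1 + b * v) * (1 + u))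
      ≤ (1 + b * v + y) * (1 + u + a * x) * ((1 + b * u) * (1 + v))) :
    jammedRate a b x u ≤ jammedRate a b y v := by
  apply g_sub_g_le_g_sub_g (by positivity) (by positivity) (by positivity) (by positivity)
  have clear (c d : ℝ) (hd : 0 < d) : 1 + c / d = (d + c) / d := by field_simp
  rw [clear _ _ (by positivity), clear _ (1 + v) (by positivity), clear _ _ (by positivity),
    clear _ (1 + u) (by positivity), div_mul_div_comm, div_mul_div_comm,
    div_le_div_iff₀ (by positivity) (by positivity)]
  linarith

lemma jammedRate_nonpos {a b P1 P2 : ℝ} (ha : 0 ≤ a) (hb : 0 ≤ b) (hP1 : 0 ≤ P1)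
    (hP2 : 0 ≤ P2) (h : (1 - a * b) * P2 ≤ a - 1) : jammedRate a b P1 P2 ≤ 0 := by
  have hcmp := jammedRate_le_jammedRate (y := 0) (v := P2) ha hb hP1 le_rfl hP2 hP2 <| by
    nlinarith [mul_nonneg (mul_nonneg hP1 (sub_nonneg.2 h))
      (by positivity : 0 ≤ (1 + b * P2) * (1 + P2))]
  simpa [jammedRate] using hcmp

lemma jammedRate_mono_left {a b P1 P1' P2 : ℝ} (ha : 0 ≤ a) (hb : 0 ≤ b) (hP1 : 0 ≤ P1)
    (hP2 : 0 ≤ P2) (h : a - 1 ≤ (1 - a * b) * P2) (hle : P1 ≤ P1') :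
    jammedRate a b P1 P2 ≤ jammedRate a b P1' P2 :=
  jammedRate_le_jammedRate ha hb hP1 (hP1.trans hle) hP2 hP2 <| by
    nlinarith [mul_nonneg (mul_nonneg (sub_nonneg.2 hle) (sub_nonneg.2 h))
      (by positivity : 0 ≤ (1 + b * P2) * (1 + P2))]

noncomputable def rateSecant (a b P1 p q : ℝ) : ℝ :=
  b * (1 - a * b) * p * q + b * (1 - a) * (p + q) - (a - b + (1 - b) * a * P1)

lemma jammedRate_le_of_rateSecant {a b P1 p q : ℝ} (ha : 0 ≤ a) (hb : 0 ≤ b) (hP1 : 0 ≤ P1)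
    (hp : 0 ≤ p) (hq : 0 ≤ q) (h : 0 ≤ (p - q) * rateSecant a b P1 p q) :
    jammedRate a b P1 p ≤ jammedRate a b P1 q :=
  jammedRate_le_jammedRate ha hb hP1 hP1 hp hq <| by
    unfold rateSecant at h
    nlinarith [mul_nonneg hP1 h]

section P2star

noncomputable def P2starDiscr (a b P1 : ℝ) : ℝ :=
  (a - 1) ^ 2 + (1 / b - a) * (a - b + (1 - b) * a * P1)

variable {a b P1 : ℝ}

lemma P2starDiscr_pos (ha : 1 ≤ a) (hb : 0 < b) (hab : a * b < 1) (hP1 : 0 ≤ P1) :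
    0 < P2starDiscr a b P1 := by
  have hb1 : b < 1 := by nlinarith
  have : 0 < 1 / b - a := by rw [sub_pos, lt_div_iff₀ hb]; linarith
  have : 0 < a - b + (1 - b) * a * P1 := by
    nlinarith [mul_nonneg (mul_nonneg (sub_nonneg.2 hb1.le) hP1) (by linarith : (0 : ℝ) ≤ a)]
  unfold P2starDiscr
  positivity

lemma one_sub_mul_mul_P2star (hab : a * b ≠ 1) :
    (1 - a * b) * P2star a b P1
      = a - 1 + √(P2starDiscr a b P1) := by
  have : 1 - a * b ≠ 0 := sub_ne_zero.2 hab.symm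
  unfold P2star P2starDiscr
  field_simp

lemma rateSecant_P2star_P2star (hb : b ≠ 0) (hab : a * b ≠ 1)
    (hdisc : 0 ≤ P2starDiscr a b P1) :
    rateSecant a b P1 (P2star a b P1) (P2star a b P1) = 0 := by
  have hP := one_sub_mul_mul_P2star (P1 := P1) hab
  set s := √(P2starDiscr a b P1)
  set P := P2star a b P1
  have hs : s ^ 2 = _ := sq_sqrt hdisc
  have hbb : b * (1 / b) = 1 := mul_one_div_cancel hb
  apply mul_left_cancel₀ (sub_ne_zero.2 hab.symm)
  unfold rateSecant P2starDiscr at *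
  linear_combination (b * ((1 - a * b) * P + a - 1 + s) + 2 * b * (1 - a)) * hP + b * hs
    + (a - b + (1 - b) * a * P1) * hbb

lemma rateSecant_eq (hb : b ≠ 0) (hab : a * b ≠ 1)
    (hdisc : 0 ≤ P2starDiscr a b P1) (p q : ℝ) :
    rateSecant a b P1 p q = b * (p - P2star a b P1) * ((1 - a * b) * q + 1 - a)
      + b * (q - P2star a b P1) * ((1 - a * b) * P2star a b P1 + 1 - a) := by
  have h0 := rateSecant_P2star_P2star hb hab hdisc
  unfold rateSecant at h0 ⊢
  linear_combination h0

lemma sub_one_le_one_sub_mul_mul_P2star (hab : a * b ≠ 1) :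
    a - 1 ≤ (1 - a * b) * P2star a b P1 := by
  rw [one_sub_mul_mul_P2star hab]
  linarith [sqrt_nonneg (P2starDiscr a b P1)]

lemma sub_one_lt_P2star (ha : 1 ≤ a) (hb : 0 < b) (hab : a * b < 1)
    (hdisc : 0 < P2starDiscr a b P1) : a - 1 < P2star a b P1 := by
  have hP := one_sub_mul_mul_P2star (P1 := P1) hab.ne
  have := sqrt_pos.2 hdisc
  have hP0 : 0 < P2star a b P1 := pos_of_mul_pos_right (a := 1 - a * b) (by linarith) (by linarith)
  nlinarith [mul_pos (mul_pos (by linarith : 0 < a) hb) hP0]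

lemma jammedRate_le_of_le_P2star (ha : 0 ≤ a) (hb : 0 < b) (hab : a * b ≠ 1)
    (hdisc : 0 ≤ P2starDiscr a b P1) (hP1 : 0 ≤ P1)
    {p q : ℝ} (hp : 0 ≤ p) (hpq : p ≤ q) (hq : a - 1 ≤ (1 - a * b) * q)
    (hqP : q ≤ P2star a b P1) :
    jammedRate a b P1 p ≤ jammedRate a b P1 q := by
  refine jammedRate_le_of_rateSecant ha hb.le hP1 hp (hp.trans hpq) ?_
  have hP := sub_one_le_one_sub_mul_mul_P2star (P1 := P1) hab
  refine mul_nonneg_of_nonpos_of_nonpos (by linarith) ?_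
  rw [rateSecant_eq hb.ne' hab hdisc]
  have h₁ := mul_nonpos_of_nonpos_of_nonneg (mul_nonpos_of_nonneg_of_nonpos hb.le
    (by linarith : p - P2star a b P1 ≤ 0)) (by linarith : 0 ≤ (1 - a * b) * q + 1 - a)
  have h₂ := mul_nonpos_of_nonpos_of_nonneg (mul_nonpos_of_nonneg_of_nonpos hb.le
    (by linarith : q - P2star a b P1 ≤ 0))
    (by linarith : 0 ≤ (1 - a * b) * P2star a b P1 + 1 - a)
  linarith

lemma jammedRate_le_of_P2star_le (ha : 0 ≤ a) (hb : 0 < b) (hab : a * b < 1)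
    (hdisc : 0 ≤ P2starDiscr a b P1) (hP1 : 0 ≤ P1)
    {p q : ℝ} (hq : 0 ≤ q) (hPq : P2star a b P1 ≤ q) (hqp : q ≤ p) :
    jammedRate a b P1 p ≤ jammedRate a b P1 q := by
  refine jammedRate_le_of_rateSecant ha hb.le hP1 (hq.trans hqp) hq ?_
  have hP := sub_one_le_one_sub_mul_mul_P2star (P1 := P1) hab.ne
  refine mul_nonneg (by linarith) ?_
  rw [rateSecant_eq hb.ne' hab.ne hdisc]
  have hq' : (1 - a * b) * P2star a b P1 ≤ (1 - a * b) * q :=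
    mul_le_mul_of_nonneg_left hPq (by linarith)
  have h₁ := mul_nonneg (mul_nonneg hb.le (by linarith : 0 ≤ p - P2star a b P1))
    (by linarith : 0 ≤ (1 - a * b) * q + 1 - a)
  have h₂ := mul_nonneg (mul_nonneg hb.le (by linarith : 0 ≤ q - P2star a b P1))
    (by linarith : 0 ≤ (1 - a * b) * P2star a b P1 + 1 - a)
  linarith

lemma jammedRate_le_min_P2star (ha : 1 ≤ a) (hb : 0 < b) (hab : a * b < 1)
    (hdisc : 0 ≤ P2starDiscr a b P1) (hP1 : 0 ≤ P1)
    {p Pbar2 : ℝ} (hp : 0 ≤ p) (hpP : p ≤ Pbar2) (hPbar2 : a - 1 ≤ (1 - a * b) * Pbar2) :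
    jammedRate a b P1 p ≤ jammedRate a b P1 (min Pbar2 (P2star a b P1)) := by
  have hP := sub_one_le_one_sub_mul_mul_P2star (P1 := P1) hab.ne
  rcases le_or_gt p (P2star a b P1) with hpP' | hPp
  · refine jammedRate_le_of_le_P2star (by linarith) hb hab.ne hdisc hP1 hp
      (le_min hpP hpP') ?_ (min_le_right _ _)
    rw [mul_min_of_nonneg _ _ (by linarith)]
    exact le_min hPbar2 hP
  · have hP0 : 0 ≤ P2star a b P1 := by nlinarith
    rw [min_eq_right (hPp.le.trans hpP)]
    exact jammedRate_le_of_P2star_le (by linarith) hb hab hdisc hP1 hP0 le_rfl hPp.le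

end P2star

lemma Rs_eq_max_zero_jammedRate {a b P1 P2 : ℝ} (ha : 1 ≤ a) (hb : b < 1) (hP1 : 0 ≤ P1)
    (hP2 : a < 1 + P2) : Rs a b P1 P2 = max 0 (jammedRate a b P1 P2) := by
  rw [Rs, if_neg (not_le.2 hP2), if_pos ha, if_neg (by linarith), if_neg (not_le.2 hb),
    jammedRate]

lemma Rs_le_max_zero_jammedRate {a b P1 P2 : ℝ} (ha : 1 ≤ a) (hb : b < 1) (hP1 : 0 ≤ P1) :
    Rs a b P1 P2 ≤ max 0 (jammedRate a b P1 P2) := by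
  by_cases hP2 : a < 1 + P2
  · exact (Rs_eq_max_zero_jammedRate ha hb hP1 hP2).le
  · rw [Rs, if_pos (not_lt.1 hP2)]
    exact le_max_left _ _

theorem stmt7_general (a b Pbar1 Pbar2 : ℝ) (ha : 1 ≤ a) (hb0 : 0 < b) (hb : b < 1 / a)
    (h : (a - 1) / (1 - a * b) < Pbar2) :
    ∀ P1 ∈ Set.Icc (0 : ℝ) Pbar1, ∀ P2 ∈ Set.Icc (0 : ℝ) Pbar2,
      Rs a b P1 P2 ≤ Rs a b Pbar1 (min Pbar2 (P2star a b Pbar1)) := by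
  rintro P1 ⟨hP1, hP1le⟩ P2 ⟨hP2, hP2le⟩
  have hab : a * b < 1 := by rwa [lt_div_iff₀ (by linarith), mul_comm] at hb
  have hb1 : b < 1 := by nlinarith
  have hPbar2 : a - 1 < (1 - a * b) * Pbar2 := by
    rw [div_lt_iff₀ (by linarith)] at h
    linarith
  have hdisc := P2starDiscr_pos ha hb0 hab (hP1.trans hP1le)
  have hQ : a < 1 + min Pbar2 (P2star a b Pbar1) := by
    have : 0 < Pbar2 := by nlinarith
    rw [← sub_lt_iff_lt_add']
    exact lt_min (by nlinarith [mul_pos (mul_pos (by linarith : 0 < a) hb0) this])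
      (sub_one_lt_P2star ha hb0 hab hdisc)
  rw [Rs_eq_max_zero_jammedRate ha hb1 (hP1.trans hP1le) hQ]
  refine (Rs_le_max_zero_jammedRate ha hb1 hP1).trans (max_le (le_max_left _ _) ?_)
  rcases lt_or_ge ((1 - a * b) * P2) (a - 1) with hlow | hhigh
  · exact (jammedRate_nonpos (by linarith) hb0.le hP1 hP2 hlow.le).trans (le_max_left _ _)
  · refine le_max_of_le_right (le_trans ?_ <|
      jammedRate_le_min_P2star ha hb0 hab hdisc.le (hP1.trans hP1le) hP2 hP2le hPbar2.le)
    exact jammedRate_mono_left (by linarith) hb0.le hP1 hP2 hhigh hP1le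

/-- If `a ≥ 1`, `0 < b < 1/a` and `P̄2 > (a-1)/(1-ab)`, the power pair
`(P̄1, min P̄2 P2*)` maximizes the achievable secrecy rate over the box `[0,P̄1] × [0,P̄2]`. -/
theorem stmt7 (a b Pbar1 Pbar2 : ℝ) (ha : 1 ≤ a) (hb0 : 0 < b) (hb : b < 1 / a)
    (hPbar1 : 0 < Pbar1) (hPbar2 : 0 < Pbar2) (h : (a - 1) / (1 - a * b) < Pbar2) :
    ∀ P1 ∈ Set.Icc (0 : ℝ) Pbar1, ∀ P2 ∈ Set.Icc (0 : ℝ) Pbar2,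
      Rs a b P1 P2 ≤ Rs a b Pbar1 (min Pbar2 (P2star a b Pbar1)) :=
  stmt7_general a b Pbar1 Pbar2 ha hb0 hb h
end

section
/- Suppose a ≥ 1, b < 1/a, and the peak powers satisfy P̄1 > 0, 0 < P̄2 ≤ (a−1)/(1−a·b). Then Rs(P1,P2) = 0 for all P1 ∈ [0, P̄1] and P2 ∈ [0, P̄2]. -/
/-- If `a ≥ 1`, `0 < b < 1/a` and `0 < P̄2 ≤ (a-1)/(1-ab)`, then `Rs(P1,P2) = 0`
on the power-constraint box `[0,P̄1] × [0,P̄2]`. -/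
theorem stmt8 (a b Pbar1 Pbar2 : ℝ) (ha : 1 ≤ a) (hb0 : 0 < b) (hb : b < 1 / a)
    (hPbar1 : 0 < Pbar1) (hPbar2 : 0 < Pbar2) (h : Pbar2 ≤ (a - 1) / (1 - a * b)) :
    ∀ P1 ∈ Set.Icc (0 : ℝ) Pbar1, ∀ P2 ∈ Set.Icc (0 : ℝ) Pbar2,
      Rs a b P1 P2 = 0 := by
  intro P1 hP1 P2 hP2
  obtain ⟨hP1l, hP1u⟩ := hP1
  obtain ⟨hP2l, hP2u⟩ := hP2
  have ha0 : (0:ℝ) < a := lt_of_lt_of_le one_pos ha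
  have hab : a * b < 1 := by
    have := (lt_div_iff₀ ha0).mp hb
    linarith [mul_comm b a]
  have hb1 : b < 1 := by nlinarith
  unfold Rs
  by_cases hc : 1 + P2 ≤ a
  · simp [hc]
  · have hP2a : P2 * (1 - a * b) ≤ a - 1 := by
      have h1ab : (0:ℝ) < 1 - a * b := by linarith
      have := (le_div_iff₀ h1ab).mp (le_trans hP2u h)
      nlinarith
    rw [if_neg hc, if_pos ha, if_neg (by linarith : ¬ (1 + P1 ≤ b)),
      if_neg (by linarith : ¬ (1:ℝ) ≤ b)]
    have hbP2 : (0:ℝ) < 1 + b * P2 := by nlinarith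
    have h1P2 : (0:ℝ) < 1 + P2 := by linarith
    have key : P1 / (1 + b * P2) ≤ a * P1 / (1 + P2) := by
      rw [div_le_div_iff₀ hbP2 h1P2]
      nlinarith
    have hx : (0:ℝ) ≤ P1 / (1 + b * P2) := div_nonneg hP1l hbP2.le
    have hg : g (P1 / (1 + b * P2)) ≤ g (a * P1 / (1 + P2)) := by
      unfold g
      have := Real.logb_le_logb_of_le (b := 2) one_lt_two
        (x := 1 + P1 / (1 + b * P2)) (y := 1 + a * P1 / (1 + P2)) (by linarith) (by linarith)
      linarith
    exact max_eq_left (by linarith)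
end

section
/- Suppose 0 < a < 1, b ≥ 1, and the peak powers P̄1 > 0 and P̄2 > 0 satisfy P̄1 < b − 1. Then for all P1 ∈ [0, P̄1] and P2 ∈ [0, P̄2], Rs(P1,P2) ≤ Rs(P̄1, P̄2); that is, full power at both the transmitter and the interferer maximizes the achievable secrecy rate over the power-constraint box. -/
lemma gdiff_s9 (x y : ℝ) (hx : 0 ≤ x) (hy : 0 ≤ y) :
    g x - g y = (1 / 2) * Real.logb 2 ((1 + x) / (1 + y)) := by
  unfold g
  rw [Real.logb_div (by linarith) (by linarith)]
  ring

/-- If `0 < a < 1`, `b ≥ 1` and `P̄1 < b - 1`, full power at both the transmitter and the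
interferer maximizes the achievable secrecy rate over the box `[0,P̄1] × [0,P̄2]`. -/
theorem stmt9 (a b Pbar1 Pbar2 : ℝ) (ha0 : 0 < a) (ha : a < 1) (hb : 1 ≤ b)
    (hPbar1 : 0 < Pbar1) (hPbar2 : 0 < Pbar2) (h : Pbar1 < b - 1) :
    ∀ P1 ∈ Set.Icc (0 : ℝ) Pbar1, ∀ P2 ∈ Set.Icc (0 : ℝ) Pbar2,
      Rs a b P1 P2 ≤ Rs a b Pbar1 Pbar2 := by
  rintro P1 ⟨h10, h11⟩ P2 ⟨h20, h21⟩
  have hc1 : ¬ (1 + P2 ≤ a) := by linarith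
  have hc1' : ¬ (1 + Pbar2 ≤ a) := by linarith
  have hc2 : ¬ (1 ≤ a) := by linarith
  have hc3 : 1 + P1 ≤ b := by linarith
  have hc3' : 1 + Pbar1 ≤ b := by linarith
  rw [Rs, Rs, if_neg hc1, if_neg hc1', if_neg hc2, if_neg hc2, if_pos hc3, if_pos hc3']
  have hP2 : (0:ℝ) < 1 + P2 := by linarith
  have hPb2 : (0:ℝ) < 1 + Pbar2 := by linarith
  have hy1 : 0 ≤ a * P1 / (1 + P2) := by positivity
  have hy2 : 0 ≤ a * Pbar1 / (1 + Pbar2) := by positivity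
  rw [gdiff_s9 _ _ h10 hy1, gdiff_s9 _ _ (le_of_lt (lt_of_lt_of_le hPbar1 (le_refl _))) hy2]
  have hd1 : (0:ℝ) < 1 + a * P1 / (1 + P2) := by positivity
  have hd2 : (0:ℝ) < 1 + a * Pbar1 / (1 + Pbar2) := by positivity
  have hnum : (0:ℝ) < 1 + P1 := by linarith
  have hA : (1 + P1) * (1 + Pbar2 + a * Pbar1) ≤ (1 + Pbar1) * (1 + Pbar2 + a * P1) := by
    nlinarith [mul_nonneg (sub_nonneg.mpr h11) (show (0:ℝ) ≤ 1 + Pbar2 - a by linarith)]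
  have hB : (1 + P2) * (1 + Pbar2 + a * P1) ≤ (1 + Pbar2) * (1 + P2 + a * P1) := by
    nlinarith [mul_nonneg (mul_nonneg ha0.le h10) (sub_nonneg.mpr h21)]
  have key : (1 + P1) * (1 + P2) * (1 + Pbar2 + a * Pbar1) ≤
      (1 + Pbar1) * (1 + Pbar2) * (1 + P2 + a * P1) := by
    calc (1 + P1) * (1 + P2) * (1 + Pbar2 + a * Pbar1)
        = (1 + P2) * ((1 + P1) * (1 + Pbar2 + a * Pbar1)) := by ring
      _ ≤ (1 + P2) * ((1 + Pbar1) * (1 + Pbar2 + a * P1)) :=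
          mul_le_mul_of_nonneg_left hA hP2.le
      _ = (1 + Pbar1) * ((1 + P2) * (1 + Pbar2 + a * P1)) := by ring
      _ ≤ (1 + Pbar1) * ((1 + Pbar2) * (1 + P2 + a * P1)) :=
          mul_le_mul_of_nonneg_left hB (by linarith)
      _ = (1 + Pbar1) * (1 + Pbar2) * (1 + P2 + a * P1) := by ring
  have hratio : (1 + P1) / (1 + a * P1 / (1 + P2)) ≤
      (1 + Pbar1) / (1 + a * Pbar1 / (1 + Pbar2)) := by
    rw [div_le_div_iff₀ hd1 hd2]
    have e1 : 1 + a * P1 / (1 + P2) = ((1 + P2) + a * P1) / (1 + P2) := by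
      field_simp
    have e2 : 1 + a * Pbar1 / (1 + Pbar2) = ((1 + Pbar2) + a * Pbar1) / (1 + Pbar2) := by
      field_simp
    rw [e1, e2, ← mul_div_assoc, ← mul_div_assoc, div_le_div_iff₀ hPb2 hP2]
    nlinarith [key]
  have hlog := Real.logb_le_logb_of_le (show (1:ℝ) < 2 by norm_num) (by positivity) hratio
  linarith
end

section
/- Suppose 0 < a < 1, b ≥ 1/a, and the peak powers P̄1 > 0 and P̄2 > 0 satisfy P̄1 ≥ b − 1 and P̄2 < (1−a)/(a·b−1). Then for all P1 ∈ [0, P̄1] and P2 ∈ [0, P̄2], Rs(P1,P2) ≤ Rs(P̄1, P̄2); that is, full power at both the transmitter and the interferer maximizes the achievable secrecy rate over the power-constraint box. -/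
lemma gdiff_le {x y x' y' : ℝ} (hx : 0 < 1 + x) (hy : 0 < 1 + y) (hx' : 0 < 1 + x')
    (hy' : 0 < 1 + y') (h : (1 + x) * (1 + y') ≤ (1 + x') * (1 + y)) :
    g x - g y ≤ g x' - g y' := by
  unfold g
  have key : Real.logb 2 ((1 + x) * (1 + y')) ≤ Real.logb 2 ((1 + x') * (1 + y)) :=
    Real.logb_le_logb_of_le one_lt_two (by positivity) h
  rw [Real.logb_mul hx.ne' hy'.ne', Real.logb_mul hx'.ne' hy.ne'] at key
  linarith

set_option maxHeartbeats 1000000 in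
/-- If `0 < a < 1`, `b ≥ 1/a`, `P̄1 ≥ b - 1` and `P̄2 < (1-a)/(ab-1)`, full power at both
the transmitter and the interferer maximizes the achievable secrecy rate over the box. -/
theorem stmt10 (a b Pbar1 Pbar2 : ℝ) (ha0 : 0 < a) (ha : a < 1) (hb : 1 / a ≤ b)
    (hPbar1 : 0 < Pbar1) (hPbar2 : 0 < Pbar2)
    (h1 : b - 1 ≤ Pbar1) (h2 : Pbar2 < (1 - a) / (a * b - 1)) :
    ∀ P1 ∈ Set.Icc (0 : ℝ) Pbar1, ∀ P2 ∈ Set.Icc (0 : ℝ) Pbar2,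
      Rs a b P1 P2 ≤ Rs a b Pbar1 Pbar2 := by
  have hab1 : (1 : ℝ) ≤ a * b := by
    rw [div_le_iff₀ ha0] at hb; nlinarith
  have hab : (1 : ℝ) < a * b := by
    rcases lt_or_eq_of_le hab1 with h | h
    · exact h
    · exfalso; rw [show a * b - 1 = 0 by linarith, div_zero] at h2; linarith
  have hb1 : (1 : ℝ) < b := by nlinarith
  have h2' : Pbar2 * (a * b - 1) < 1 - a := (lt_div_iff₀ (by linarith)).mp h2
  have hC : 0 < 1 + Pbar2 - a - a * b * Pbar2 := by nlinarith
  -- simplified form of Rs under our hypotheses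
  have hRs : ∀ p1 p2 : ℝ, 0 ≤ p1 → 0 ≤ p2 →
      Rs a b p1 p2 = if 1 + p1 ≤ b then g p1 - g (a * p1 / (1 + p2))
        else g (p1 + b * p2) - g (a * p1 + p2) := by
    intro p1 p2 hp1 hp2
    unfold Rs
    rw [if_neg (by linarith), if_neg (by linarith)]
    by_cases h : 1 + p1 ≤ b
    · rw [if_pos h, if_pos h]
    · rw [if_neg h, if_neg h, if_pos]
      rw [div_le_iff₀ (by nlinarith)]
      nlinarith [mul_nonneg (by linarith : (0 : ℝ) ≤ a * b - 1) hp1]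
  intro P1 hP1 P2 hP2
  obtain ⟨hP1l, hP1r⟩ := hP1
  obtain ⟨hP2l, hP2r⟩ := hP2
  have hp2 : (0 : ℝ) < 1 + P2 := by linarith
  have hq : (0 : ℝ) < 1 + Pbar2 := by linarith
  have hp1 : (0 : ℝ) < 1 + P1 := by linarith
  have hpb1 : (0 : ℝ) < 1 + Pbar1 := by linarith
  have hyP2 : (0 : ℝ) < 1 + a * P1 / (1 + P2) := by
    have : 0 ≤ a * P1 / (1 + P2) := div_nonneg (mul_nonneg ha0.le hP1l) hp2.le
    linarith
  have hyQ : (0 : ℝ) < 1 + a * P1 / (1 + Pbar2) := by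
    have : 0 ≤ a * P1 / (1 + Pbar2) := div_nonneg (mul_nonneg ha0.le hP1l) hq.le
    linarith
  have hyQ' : (0 : ℝ) < 1 + a * Pbar1 / (1 + Pbar2) := by
    have : 0 ≤ a * Pbar1 / (1 + Pbar2) := div_nonneg (mul_nonneg ha0.le hPbar1.le) hq.le
    linarith
  have e2 : (1 : ℝ) + a * P1 / (1 + P2) = (1 + P2 + a * P1) / (1 + P2) := by
    field_simp
  have eQ : (1 : ℝ) + a * P1 / (1 + Pbar2) = (1 + Pbar2 + a * P1) / (1 + Pbar2) := by
    field_simp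
  have eQ' : (1 : ℝ) + a * Pbar1 / (1 + Pbar2) = (1 + Pbar2 + a * Pbar1) / (1 + Pbar2) := by
    field_simp
  have hbQ0 : (0 : ℝ) ≤ b * Pbar2 := mul_nonneg (by linarith) hPbar2.le
  have habm : (0 : ℝ) ≤ a * (b - 1) := mul_nonneg ha0.le (by linarith)
  have habQ : (0 : ℝ) ≤ a * Pbar1 := mul_nonneg ha0.le hPbar1.le
  rw [hRs P1 P2 hP1l hP2l, hRs Pbar1 Pbar2 hPbar1.le hPbar2.le]
  by_cases hA : 1 + P1 ≤ b
  · rw [if_pos hA]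
    have step1 : g P1 - g (a * P1 / (1 + P2)) ≤ g P1 - g (a * P1 / (1 + Pbar2)) := by
      apply gdiff_le hp1 hyP2 hp1 hyQ
      rw [eQ, e2, ← mul_div_assoc, ← mul_div_assoc, div_le_div_iff₀ hq hp2]
      nlinarith [mul_nonneg (mul_nonneg (mul_nonneg hp1.le ha0.le) hP1l)
        (sub_nonneg.2 hP2r)]
    by_cases hA' : 1 + Pbar1 ≤ b
    · rw [if_pos hA']
      refine step1.trans ?_
      apply gdiff_le hp1 hyQ hpb1 hyQ'
      rw [eQ, eQ', ← mul_div_assoc, ← mul_div_assoc, div_le_div_iff₀ hq hq]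
      nlinarith [mul_nonneg (mul_nonneg (sub_nonneg.2 hP1r)
        (by linarith : (0 : ℝ) ≤ 1 + Pbar2 - a)) hq.le]
    · rw [if_neg hA']
      push_neg at hA'
      refine step1.trans ?_
      have hmid : g P1 - g (a * P1 / (1 + Pbar2))
          ≤ g ((b - 1) + b * Pbar2) - g (a * (b - 1) + Pbar2) := by
        apply gdiff_le hp1 hyQ (by linarith) (by linarith)
        rw [eQ, ← mul_div_assoc, le_div_iff₀ hq]
        nlinarith [mul_nonneg hq.le (mul_nonneg
          (by linarith : (0 : ℝ) ≤ b - 1 - P1) (by linarith : (0 : ℝ) ≤ 1 + Pbar2 - a))]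
      refine hmid.trans ?_
      apply gdiff_le (by linarith) (by linarith) (by linarith) (by linarith)
      nlinarith [mul_nonneg (by linarith : (0 : ℝ) ≤ Pbar1 - (b - 1)) hC.le]
  · rw [if_neg hA]
    push_neg at hA
    rw [if_neg (by push_neg; linarith)]
    have hbP2 : (0 : ℝ) ≤ b * P2 := mul_nonneg (by linarith) hP2l
    have hbQ : (0 : ℝ) ≤ b * Pbar2 := mul_nonneg (by linarith) hPbar2.le
    have haP1 : (0 : ℝ) ≤ a * P1 := mul_nonneg ha0.le hP1l
    have haPb1 : (0 : ℝ) ≤ a * Pbar1 := mul_nonneg ha0.le hPbar1.le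
    have step1 : g (P1 + b * P2) - g (a * P1 + P2)
        ≤ g (P1 + b * Pbar2) - g (a * P1 + Pbar2) := by
      apply gdiff_le (by linarith) (by linarith) (by linarith) (by linarith)
      nlinarith [mul_nonneg (sub_nonneg.2 hP2r)
        (by nlinarith [mul_nonneg (by linarith : (0 : ℝ) ≤ a * b - 1) hP1l] :
          (0 : ℝ) ≤ (b - 1) + P1 * (a * b - 1))]
    refine step1.trans ?_
    apply gdiff_le (by linarith) (by linarith) (by linarith) (by linarith)
    nlinarith [mul_nonneg (sub_nonneg.2 hP1r) hC.le]
end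

section
/- Suppose 0 < a < 1, 1 ≤ b < 1/a, and the peak powers P̄1 > 0 and P̄2 > 0 satisfy b − 1 ≤ P̄1 < (b−1)/(1−a·b). Then for all P1 ∈ [0, P̄1] and P2 ∈ [0, P̄2], Rs(P1,P2) ≤ Rs(P̄1, P̄2); that is, full power at both the transmitter and the interferer maximizes the achievable secrecy rate over the power-constraint box. -/
lemma g_sub_le {x y u v : ℝ} (hx : 0 ≤ x) (hy : 0 ≤ y) (hu : 0 ≤ u) (hv : 0 ≤ v)
    (h : (1 + x) * (1 + v) ≤ (1 + u) * (1 + y)) : g x - g y ≤ g u - g v := by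
  have hx1 : (0:ℝ) < 1 + x := by linarith
  have hy1 : (0:ℝ) < 1 + y := by linarith
  have hu1 : (0:ℝ) < 1 + u := by linarith
  have hv1 : (0:ℝ) < 1 + v := by linarith
  have key : Real.logb 2 ((1 + x) * (1 + v)) ≤ Real.logb 2 ((1 + u) * (1 + y)) :=
    Real.logb_le_logb_of_le one_lt_two (by positivity) h
  rw [Real.logb_mul hx1.ne' hv1.ne', Real.logb_mul hu1.ne' hy1.ne'] at key
  unfold g
  nlinarith [key]

set_option maxHeartbeats 1000000 in
/-- If `0 < a < 1`, `1 ≤ b < 1/a` and `b - 1 ≤ P̄1 < (b-1)/(1-ab)`, full power at both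
the transmitter and the interferer maximizes the achievable secrecy rate over the box. -/
theorem stmt12 (a b Pbar1 Pbar2 : ℝ) (ha0 : 0 < a) (ha : a < 1)
    (hb1 : 1 ≤ b) (hb2 : b < 1 / a)
    (hPbar1 : 0 < Pbar1) (hPbar2 : 0 < Pbar2)
    (h1 : b - 1 ≤ Pbar1) (h2 : Pbar1 < (b - 1) / (1 - a * b)) :
    ∀ P1 ∈ Set.Icc (0 : ℝ) Pbar1, ∀ P2 ∈ Set.Icc (0 : ℝ) Pbar2,
      Rs a b P1 P2 ≤ Rs a b Pbar1 Pbar2 := by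
  have hab : a * b < 1 := by
    nlinarith [(lt_div_iff₀ ha0).mp hb2]
  have hab' : 0 < 1 - a * b := by linarith
  -- `Pbar1 * (1 - a*b) < b - 1`, i.e. `1 + Pbar1 < b * (1 + a * Pbar1)`
  have h2' : Pbar1 * (1 - a * b) < b - 1 := (lt_div_iff₀ hab').mp h2
  have hbeta_bar : 1 + Pbar1 < b * (1 + a * Pbar1) := by nlinarith
  intro P1 hP1 P2 hP2
  obtain ⟨hP10, hP11⟩ := hP1
  obtain ⟨hP20, hP21⟩ := hP2
  have h1P2 : (0:ℝ) < 1 + P2 := by linarith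
  have h1Pb2 : (0:ℝ) < 1 + Pbar2 := by linarith
  have h1aP1 : (0:ℝ) < 1 + a * P1 := by nlinarith
  have h1aPb1 : (0:ℝ) < 1 + a * Pbar1 := by nlinarith
  -- β1(P1) ≤ b for all P1 ≤ Pbar1
  have hbeta : 1 + P1 < b * (1 + a * P1) := by nlinarith
  have hbeta' : (1 + P1) / (1 + a * P1) ≤ b := by
    rw [div_le_iff₀ h1aP1]; nlinarith
  have hbetab' : (1 + Pbar1) / (1 + a * Pbar1) ≤ b := by
    rw [div_le_iff₀ h1aPb1]; nlinarith
  have hna : ¬ (1 ≤ a) := by linarith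
  have hn1 : ¬ (1 + P2 ≤ a) := by linarith
  have hn1b : ¬ (1 + Pbar2 ≤ a) := by linarith
  -- Rs(P1,P2) ≤ F(P1,P2)
  have step1 : Rs a b P1 P2 ≤ g (P1 + b * P2) - g (a * P1 + P2) := by
    rw [Rs, if_neg hn1, if_neg hna]
    by_cases hc : 1 + P1 ≤ b
    · rw [if_pos hc]
      apply g_sub_le hP10 (by positivity) (by positivity) (by positivity)
      have : (1:ℝ) + a * P1 / (1 + P2) = (1 + P2 + a * P1) / (1 + P2) := by
        field_simp
      rw [this, ← mul_div_assoc, le_div_iff₀ h1P2]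
      have key : (1+(P1+b*P2))*(1+P2+a*P1) - (1+P1)*(1+(a*P1+P2))*(1+P2)
          = (1+P2+a*P1)*(P2*(b-(1+P1))) := by ring
      nlinarith [mul_nonneg (mul_nonneg (by linarith : (0:ℝ) ≤ 1+P2+a*P1) hP20)
        (by linarith : (0:ℝ) ≤ b-(1+P1))]
    · rw [if_neg hc, if_pos hbeta']
  -- F(P1,P2) ≤ F(Pbar1,P2)
  have step2 : g (P1 + b * P2) - g (a * P1 + P2)
      ≤ g (Pbar1 + b * P2) - g (a * Pbar1 + P2) := by
    apply g_sub_le (by positivity) (by positivity) (by positivity) (by positivity)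
    have key : (1+(Pbar1+b*P2))*(1+(a*P1+P2)) - (1+(P1+b*P2))*(1+(a*Pbar1+P2))
        = (Pbar1-P1)*(1-a) + P2*((Pbar1-P1)*(1-a*b)) := by ring
    nlinarith [mul_nonneg (sub_nonneg.mpr hP11) (by linarith : (0:ℝ) ≤ 1 - a),
      mul_nonneg hP20 (mul_nonneg (sub_nonneg.mpr hP11) hab'.le)]
  -- F(Pbar1,P2) ≤ F(Pbar1,Pbar2)
  have step3 : g (Pbar1 + b * P2) - g (a * Pbar1 + P2)
      ≤ g (Pbar1 + b * Pbar2) - g (a * Pbar1 + Pbar2) := by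
    apply g_sub_le (by positivity) (by positivity) (by positivity) (by positivity)
    have key : (1+(Pbar1+b*Pbar2))*(1+(a*Pbar1+P2)) - (1+(Pbar1+b*P2))*(1+(a*Pbar1+Pbar2))
        = (Pbar2-P2)*(b*(1+a*Pbar1)-(1+Pbar1)) := by ring
    nlinarith [mul_nonneg (sub_nonneg.mpr hP21)
      (by linarith : (0:ℝ) ≤ b*(1+a*Pbar1)-(1+Pbar1))]
  -- F(Pbar1,Pbar2) ≤ Rs(Pbar1,Pbar2)
  have step4 : g (Pbar1 + b * Pbar2) - g (a * Pbar1 + Pbar2) ≤ Rs a b Pbar1 Pbar2 := by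
    rw [Rs, if_neg hn1b, if_neg hna]
    by_cases hc : 1 + Pbar1 ≤ b
    · rw [if_pos hc]
      have hbe : b = 1 + Pbar1 := le_antisymm (by linarith) hc
      apply g_sub_le (by positivity) (by positivity) hPbar1.le (by positivity)
      have : (1:ℝ) + a * Pbar1 / (1 + Pbar2) = (1 + Pbar2 + a * Pbar1) / (1 + Pbar2) := by
        field_simp
      rw [this, ← mul_div_assoc, div_le_iff₀ h1Pb2]
      subst hbe
      apply le_of_eq; ring
    · rw [if_neg hc, if_pos hbetab']
  linarith
end

section
/- Suppose 0 < a < 1, 1 ≤ b < 1/a, and the peak powers P̄1 > 0 and P̄2 > 0 satisfy P̄1 ≥ (b−1)/(1−a·b). Then for all P1 ∈ [0, P̄1] and P2 ∈ [0, P̄2], Rs(P1,P2) ≤ Rs(P̄1, 0); that is, when the transmitter has enough power it is optimal over the power-constraint box for the transmitter to use full power and for the interferer to remain silent. -/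
/-- Cross-multiplication comparison for differences of `g`. -/
lemma g_sub_le_g_sub (x y u v : ℝ) (hx : 0 ≤ x) (hy : 0 ≤ y) (hu : 0 ≤ u) (hv : 0 ≤ v)
    (hle : (1 + x) * (1 + v) ≤ (1 + u) * (1 + y)) : g x - g y ≤ g u - g v := by
  have h1 : (0:ℝ) < 1 + x := by linarith
  have h2 : (0:ℝ) < 1 + y := by linarith
  have h3 : (0:ℝ) < 1 + u := by linarith
  have h4 : (0:ℝ) < 1 + v := by linarith
  unfold g
  rw [← mul_sub, ← mul_sub, ← Real.logb_div h1.ne' h2.ne', ← Real.logb_div h3.ne' h4.ne']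
  have hdiv : (1 + x) / (1 + y) ≤ (1 + u) / (1 + v) := by
    rw [div_le_div_iff₀ h2 h4]; exact hle
  have := Real.logb_le_logb_of_le (by norm_num : (1:ℝ) < 2) (by positivity) hdiv
  linarith

set_option maxHeartbeats 1000000 in
/-- If `0 < a < 1`, `1 ≤ b < 1/a` and `P̄1 ≥ (b-1)/(1-ab)`, it is optimal over the box
for the transmitter to use full power and the interferer to remain silent. -/
theorem stmt14 (a b Pbar1 Pbar2 : ℝ) (ha0 : 0 < a) (ha : a < 1)
    (hb1 : 1 ≤ b) (hb2 : b < 1 / a)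
    (hPbar1 : 0 < Pbar1) (hPbar2 : 0 < Pbar2) (h : (b - 1) / (1 - a * b) ≤ Pbar1) :
    ∀ P1 ∈ Set.Icc (0 : ℝ) Pbar1, ∀ P2 ∈ Set.Icc (0 : ℝ) Pbar2,
      Rs a b P1 P2 ≤ Rs a b Pbar1 0 := by
  intro P1 hP1 P2 hP2
  obtain ⟨hP10, hP11⟩ := hP1
  obtain ⟨hP20, hP21⟩ := hP2
  have hab : a * b < 1 := by
    have := mul_lt_mul_of_pos_left hb2 ha0
    rwa [mul_one_div, div_self ha0.ne'] at this
  have hKb : b * (1 + a * Pbar1) ≤ 1 + Pbar1 := by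
    rw [div_le_iff₀ (by linarith)] at h
    nlinarith
  have hb0 : (0:ℝ) < b := by linarith
  -- evaluate the right-hand side
  have hRHS : Rs a b Pbar1 0 = g Pbar1 - g (a * Pbar1) := by
    simp only [Rs]
    rw [if_neg (by linarith), if_neg (by linarith),
        if_neg (show ¬(1 + Pbar1 ≤ b) by nlinarith [mul_pos (mul_pos hb0 ha0) hPbar1])]
    split_ifs with h4 h5
    · norm_num
    · rfl
    · exfalso
      apply h5
      have hden : (0:ℝ) < 1 + a * Pbar1 + (1 - a) * 0 := by nlinarith
      have : a * (1 + Pbar1) / (1 + a * Pbar1 + (1 - a) * 0) ≤ 1 := by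
        rw [div_le_one hden]
        have e : a * (1 + Pbar1) = a + a * Pbar1 := by ring
        rw [e]
        have e2 : (0:ℝ) ≤ a * Pbar1 := mul_nonneg ha0.le hPbar1.le
        linarith
      linarith
  rw [hRHS]
  simp only [Rs]
  rw [if_neg (by linarith : ¬(1 + P2 ≤ a)), if_neg (by linarith : ¬((1:ℝ) ≤ a))]
  have hP2p : (0:ℝ) < 1 + P2 := by linarith
  split_ifs with hA hB hC
  · -- case `1 + P1 ≤ b`
    apply g_sub_le_g_sub _ _ _ _ hP10 (by positivity) hPbar1.le (by positivity)
    have h1 : (1 + P1) * (1 + a * Pbar1) ≤ 1 + Pbar1 := by nlinarith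
    have h2 : 0 ≤ a * P1 / (1 + P2) := by positivity
    nlinarith
  · -- case `β1 ≤ b < 1 + P1`
    apply g_sub_le_g_sub _ _ _ _ (by nlinarith) (by nlinarith) hPbar1.le (by positivity)
    rw [div_le_iff₀ (by nlinarith)] at hB
    have t1 : 1 + (P1 + b * P2) ≤ b * (1 + a * P1 + P2) := by nlinarith
    have t2 := mul_le_mul_of_nonneg_right t1 (show (0:ℝ) ≤ 1 + a * Pbar1 by nlinarith)
    have t3 := mul_le_mul_of_nonneg_left hKb (show (0:ℝ) ≤ 1 + a * P1 + P2 by nlinarith)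
    nlinarith
  · -- case `β2 ≤ b < β1`
    apply g_sub_le_g_sub _ _ _ _ hP10 (by positivity) hPbar1.le (by positivity)
    nlinarith [mul_nonneg (sub_nonneg.mpr hP11) (sub_nonneg.mpr ha.le)]
  · -- case `b < β2` is impossible since `β2 < 1 ≤ b`
    exfalso
    apply hC
    have e1 : (0:ℝ) ≤ a * P1 := mul_nonneg ha0.le hP10
    have e2 : (0:ℝ) ≤ (1 - a) * P2 := mul_nonneg (by linarith) hP20
    have hden : (0:ℝ) < 1 + a * P1 + (1 - a) * P2 := by linarith
    have : a * (1 + P1) / (1 + a * P1 + (1 - a) * P2) ≤ 1 := by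
      rw [div_le_one hden]
      have : a * (1 + P1) = a + a * P1 := by ring
      rw [this]; linarith
    linarith
end

section
/- Suppose 0 < a < 1, a < b < 1, and the peak powers P̄1 > 0 and P̄2 > 0 satisfy P̄1 < (b−a)/(a·(1−b)). Then for all P1 ∈ [0, P̄1] and P2 ∈ [0, P̄2], Rs(P1,P2) ≤ Rs(P̄1, 0); that is, when the transmitter does not have enough power it is optimal over the power-constraint box for the transmitter to use full power and for the interferer to remain silent. -/
/-!
Below the power threshold every admissible pair `(P1, P2)` lies in the regime `β2 ≤ b < β1`,
where `Rs = g P1 - g (a * P1)` does not depend on `P2`; this expression is increasing in `P1`,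
since it is `(1/2) log₂ ((1 + P1) / (1 + a P1))`.
-/

theorem monotoneOn_g_sub_g_mul {a : ℝ} (ha0 : 0 ≤ a) (ha1 : a ≤ 1) :
    MonotoneOn (fun P => g P - g (a * P)) (Set.Ici 0) := by
  intro P (hP : 0 ≤ P) Q (hQ : 0 ≤ Q) hPQ
  have hlog : Real.logb 2 (1 + P) + Real.logb 2 (1 + a * Q)
      ≤ Real.logb 2 (1 + Q) + Real.logb 2 (1 + a * P) := by
    rw [← Real.logb_mul (by positivity) (by positivity),
      ← Real.logb_mul (by positivity) (by positivity)]
    apply Real.logb_le_logb_of_le (by norm_num) (by positivity)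
    nlinarith [mul_le_mul_of_nonneg_left hPQ (sub_nonneg.mpr ha1)]
  simp only [g]
  linarith

theorem Rs_eq_g_sub_g_mul {a b P1 P2 : ℝ} (ha0 : 0 ≤ a) (ha : a < 1) (hb : b < 1)
    (hP1 : 0 ≤ P1) (hP2 : 0 ≤ P2) (hβ : a * (1 + P1) ≤ b * (1 + a * P1)) :
    Rs a b P1 P2 = g P1 - g (a * P1) := by
  have haP1 : 0 < 1 + a * P1 := by positivity
  have hb0 : 0 ≤ b := by
    by_contra! hb0
    nlinarith [mul_neg_of_neg_of_pos hb0 haP1]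
  have hβ1 : b < (1 + P1) / (1 + a * P1) := by
    rw [lt_div_iff₀ haP1]
    nlinarith [mul_le_mul_of_nonneg_right ha.le hP1]
  have hβ2 : a * (1 + P1) / (1 + a * P1 + (1 - a) * P2) ≤ b := by
    rw [div_le_iff₀ (by nlinarith)]
    nlinarith [mul_nonneg (mul_nonneg hb0 (sub_nonneg.mpr ha.le)) hP2]
  unfold Rs
  rw [if_neg (by linarith), if_neg (by linarith), if_neg (by linarith), if_neg hβ1.not_ge,
    if_pos hβ2]

theorem mul_one_add_le_of_le_threshold {a b P : ℝ} (ha0 : 0 < a) (hb : b < 1)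
    (hP : P ≤ (b - a) / (a * (1 - b))) : a * (1 + P) ≤ b * (1 + a * P) := by
  rw [le_div_iff₀ (mul_pos ha0 (sub_pos.mpr hb))] at hP
  linarith

theorem stmt15_general (a b Pbar1 Pbar2 : ℝ) (ha0 : 0 < a) (ha : a < 1)
    (hb2 : b < 1)
    (h : Pbar1 < (b - a) / (a * (1 - b))) :
    ∀ P1 ∈ Set.Icc (0 : ℝ) Pbar1, ∀ P2 ∈ Set.Icc (0 : ℝ) Pbar2,
      Rs a b P1 P2 ≤ Rs a b Pbar1 0 := by
  rintro P1 ⟨hP1, hP1le⟩ P2 ⟨hP2, -⟩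
  have hPbar1 : 0 ≤ Pbar1 := hP1.trans hP1le
  have hβ : ∀ P ≤ Pbar1, a * (1 + P) ≤ b * (1 + a * P) := fun P hP =>
    mul_one_add_le_of_le_threshold ha0 hb2 (hP.trans h.le)
  rw [Rs_eq_g_sub_g_mul ha0.le ha hb2 hP1 hP2 (hβ P1 hP1le),
    Rs_eq_g_sub_g_mul ha0.le ha hb2 hPbar1 le_rfl (hβ Pbar1 le_rfl)]
  exact monotoneOn_g_sub_g_mul ha0.le ha.le hP1 hPbar1 hP1le

/-- If `0 < a < 1`, `a < b < 1` and `P̄1 < (b-a)/(a(1-b))`, it is optimal over the box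
for the transmitter to use full power and the interferer to remain silent. -/
theorem stmt15 (a b Pbar1 Pbar2 : ℝ) (ha0 : 0 < a) (ha : a < 1)
    (hb1 : a < b) (hb2 : b < 1)
    (hPbar1 : 0 < Pbar1) (hPbar2 : 0 < Pbar2) (h : Pbar1 < (b - a) / (a * (1 - b))) :
    ∀ P1 ∈ Set.Icc (0 : ℝ) Pbar1, ∀ P2 ∈ Set.Icc (0 : ℝ) Pbar2,
      Rs a b P1 P2 ≤ Rs a b Pbar1 0 :=
  stmt15_general a b Pbar1 Pbar2 ha0 ha hb2 h
end
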